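/- Let u : ℝ → H be twice continuously differentiable with u(t) ∈ D(h) for all t, solving the abstract Klein–Gordon equation u''(t) = 2 i k u'(t) − h u(t). Then for every ℓ ∈ ℝ, the energy E_ℓ(t) := ‖u'(t) − i ℓ u(t)‖² + (h u(t) | u(t)) + 2ℓ (k u(t) | u(t)) − ℓ² ‖u(t)‖² is constant in t. (This is the conservation of the energy ⟨u,u⟩_ℓ associated with the pencil p(ℓ) = h + ℓ(2k − ℓ).) -/

import Mathlib

/-!
With `v = u'`, the `ℓ`-energy splits as `E_ℓ = (‖v‖² + (hu|u)) + 2ℓ (Im (v|u) + (ku|u))`, and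
each bracket has zero derivative by the equation and the symmetry of `h` and `k`. The only
delicate point is differentiating `(hu|u)` for unbounded `h`: by the equation, `hu = 2ik u' - u''`
is continuous, and symmetry of `h` moves the whole difference quotient of `(hu|u)` onto `u`.
-/

open Complex

noncomputable section

variable {H : Type*} [NormedAddCommGroup H] [InnerProductSpace ℂ H] [CompleteSpace H]

open scoped InnerProductSpace ComplexConjugate

variable {E : Type*} [NormedAddCommGroup E] [InnerProductSpace ℂ E]

theorem norm_sub_I_mul_smul_sq (x y : E) (ℓ : ℝ) :
    ‖x - (I * ℓ) • y‖ ^ 2 = ‖x‖ ^ 2 + 2 * ℓ * (⟪x, y⟫_ℂ).im + ℓ ^ 2 * ‖y‖ ^ 2 := by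
  rw [@norm_sub_sq ℂ, inner_smul_right, norm_smul, norm_mul, norm_I, norm_real, Real.norm_eq_abs]
  simp only [RCLike.re_to_complex, mul_re, mul_im, I_re, I_im, ofReal_re, ofReal_im, one_mul,
    mul_pow, sq_abs]
  ring

theorem IsSelfAdjoint.isFormalAdjoint_self [CompleteSpace E] {A : E →ₗ.[ℂ] E}
    (hA : IsSelfAdjoint A) : A.IsFormalAdjoint A := by
  have hadj := LinearPMap.adjoint_isFormalAdjoint hA.dense_domain
  rwa [LinearPMap.isSelfAdjoint_def.mp hA] at hadj

theorem hasDerivAt_inner_of_inner_swap {w u : ℝ → E} {u' : E} {x : ℝ}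
    (hswap : ∀ s t, ⟪w s, u t⟫_ℂ = ⟪u s, w t⟫_ℂ) (hw : ContinuousAt w x) (hu : HasDerivAt u u' x) :
    HasDerivAt (fun t => ⟪w t, u t⟫_ℂ) (⟪w x, u'⟫_ℂ + ⟪u', w x⟫_ℂ) x := by
  rw [hasDerivAt_iff_tendsto_slope] at hu ⊢
  have hslope : ∀ y, slope (fun t => ⟪w t, u t⟫_ℂ) x y
      = ⟪w y, slope u x y⟫_ℂ + ⟪slope u x y, w x⟫_ℂ := by
    intro y
    simp only [slope_def_module, inner_smul_right_eq_smul, inner_smul_left_eq_smul, inner_sub_left,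
      inner_sub_right, hswap y x, hswap x x]
    rw [← smul_add, sub_add_sub_cancel]
  rw [funext hslope]
  exact ((hw.mono_left nhdsWithin_le_nhds).inner hu).add (hu.inner tendsto_const_nhds)

namespace KleinGordon

variable {h : E →ₗ.[ℂ] E} {k : E →L[ℂ] E} {u v : ℝ → E} {hdom : ∀ t, u t ∈ h.domain}

theorem hasDerivAt_energy (hh : h.IsFormalAdjoint h) (hk : (k : E →ₗ[ℂ] E).IsSymmetric)
    (hu : ∀ t, HasDerivAt u (v t) t)
    (hv : ∀ t, HasDerivAt v ((2 * I) • k (v t) - h ⟨u t, hdom t⟩) t)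
    (hhu : Continuous fun t => h ⟨u t, hdom t⟩) (t : ℝ) :
    HasDerivAt (fun t => ⟪v t, v t⟫_ℂ + ⟪h ⟨u t, hdom t⟩, u t⟫_ℂ) 0 t := by
  have hswap : ∀ s t, ⟪h ⟨u s, hdom s⟩, u t⟫_ℂ = ⟪u s, h ⟨u t, hdom t⟩⟫_ℂ :=
    fun s t => hh ⟨u s, hdom s⟩ ⟨u t, hdom t⟩
  refine (((hv t).inner ℂ (hv t)).add
    (hasDerivAt_inner_of_inner_swap hswap hhu.continuousAt (hu t))).congr_deriv ?_
  have hk : ∀ x y, ⟪k x, y⟫_ℂ = ⟪x, k y⟫_ℂ := hk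
  simp only [inner_sub_left, inner_sub_right, inner_smul_left, inner_smul_right, map_mul, conj_I,
    map_ofNat, hk (v t) (v t)]
  ring

theorem hasDerivAt_charge (hh : h.IsFormalAdjoint h) (hk : (k : E →ₗ[ℂ] E).IsSymmetric)
    (hu : ∀ t, HasDerivAt u (v t) t)
    (hv : ∀ t, HasDerivAt v ((2 * I) • k (v t) - h ⟨u t, hdom t⟩) t) (t : ℝ) :
    HasDerivAt (fun t => ⟪v t, u t⟫_ℂ - ⟪u t, v t⟫_ℂ + 2 * I * ⟪k (u t), u t⟫_ℂ) 0 t := by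
  have hku : HasDerivAt (fun t => k (u t)) (k (v t)) t :=
    (k.hasFDerivAt.restrictScalars ℝ).comp_hasDerivAt t (hu t)
  refine ((((hv t).inner ℂ (hu t)).sub ((hu t).inner ℂ (hv t))).add
    ((hku.inner ℂ (hu t)).const_mul (2 * I))).congr_deriv ?_
  have hk : ∀ x y, ⟪k x, y⟫_ℂ = ⟪x, k y⟫_ℂ := hk
  simp only [inner_sub_left, inner_sub_right, inner_smul_left, inner_smul_right, map_mul, conj_I,
    map_ofNat, hk (u t) (v t), hh ⟨u t, hdom t⟩ ⟨u t, hdom t⟩]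
  ring

theorem energy_conserved (hh : h.IsFormalAdjoint h) (hk : (k : E →ₗ[ℂ] E).IsSymmetric)
    (hu : ∀ t, HasDerivAt u (v t) t)
    (hv : ∀ t, HasDerivAt v ((2 * I) • k (v t) - h ⟨u t, hdom t⟩) t)
    (hhu : Continuous fun t => h ⟨u t, hdom t⟩) (s t : ℝ) :
    ‖v s‖ ^ 2 + (⟪h ⟨u s, hdom s⟩, u s⟫_ℂ).re = ‖v t‖ ^ 2 + (⟪h ⟨u t, hdom t⟩, u t⟫_ℂ).re := by
  have hconst := is_const_of_deriv_eq_zero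
    (fun t => (hasDerivAt_energy hh hk hu hv hhu t).differentiableAt)
    (fun t => (hasDerivAt_energy hh hk hu hv hhu t).deriv) s t
  simpa only [← RCLike.re_to_complex, map_add, inner_self_eq_norm_sq] using congrArg re hconst

theorem charge_conserved (hh : h.IsFormalAdjoint h) (hk : (k : E →ₗ[ℂ] E).IsSymmetric)
    (hu : ∀ t, HasDerivAt u (v t) t)
    (hv : ∀ t, HasDerivAt v ((2 * I) • k (v t) - h ⟨u t, hdom t⟩) t) (s t : ℝ) :
    (⟪v s, u s⟫_ℂ).im + (⟪k (u s), u s⟫_ℂ).re = (⟪v t, u t⟫_ℂ).im + (⟪k (u t), u t⟫_ℂ).re := by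
  have hconst := is_const_of_deriv_eq_zero
    (fun t => (hasDerivAt_charge hh hk hu hv t).differentiableAt)
    (fun t => (hasDerivAt_charge hh hk hu hv t).deriv) s t
  have him := congrArg im hconst
  simp only [← inner_conj_symm (u _) (v _), add_im, sub_im, conj_im, mul_im, mul_re, re_ofNat,
    im_ofNat, I_re, I_im] at him
  linarith

end KleinGordon

/-- For a solution of `u'' = 2ik u' - h u`, the energy
`E_ℓ(t) = ‖u'-iℓu‖² + (hu|u) + 2ℓ(ku|u) - ℓ²‖u‖²` is conserved. -/
theorem energy_ell_conserved
    (h : H →ₗ.[ℂ] H) (hsa : IsSelfAdjoint h)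
    (k : H →L[ℂ] H) (hk : IsSelfAdjoint k)
    (u : ℝ → H) (hreg : ContDiff ℝ 2 u)
    (hdom : ∀ t : ℝ, u t ∈ h.domain)
    (hode : ∀ t : ℝ,
      deriv (deriv u) t = (2 * Complex.I) • k (deriv u t) - h ⟨u t, hdom t⟩)
    (ℓ : ℝ) :
    ∀ s t : ℝ,
      ‖deriv u s - (Complex.I * (ℓ : ℂ)) • u s‖ ^ 2
          + (inner ℂ (h ⟨u s, hdom s⟩) (u s) : ℂ).re
          + 2 * ℓ * (inner ℂ (k (u s)) (u s) : ℂ).re - ℓ ^ 2 * ‖u s‖ ^ 2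
        = ‖deriv u t - (Complex.I * (ℓ : ℂ)) • u t‖ ^ 2
          + (inner ℂ (h ⟨u t, hdom t⟩) (u t) : ℂ).re
          + 2 * ℓ * (inner ℂ (k (u t)) (u t) : ℂ).re - ℓ ^ 2 * ‖u t‖ ^ 2 := by
  intro s t
  have hu' : ContDiff ℝ 1 (deriv u) := hreg.deriv'
  have hu : ∀ t, HasDerivAt u (deriv u t) t :=
    fun t => (hreg.differentiable two_ne_zero t).hasDerivAt
  have hv : ∀ t, HasDerivAt (deriv u) ((2 * I) • k (deriv u t) - h ⟨u t, hdom t⟩) t :=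
    fun t => hode t ▸ (hu'.differentiable one_ne_zero t).hasDerivAt
  have hhu : Continuous fun t => h ⟨u t, hdom t⟩ := by
    refine (((k.continuous.comp hu'.continuous).const_smul (2 * I)).sub
      hu'.continuous_deriv_one).congr fun t => ?_
    simp only [Pi.sub_apply, Pi.smul_apply, Function.comp_apply, hode, sub_sub_cancel]
  rw [norm_sub_I_mul_smul_sq, norm_sub_I_mul_smul_sq]
  linear_combination KleinGordon.energy_conserved hsa.isFormalAdjoint_self hk.isSymmetric hu hv hhu s t
    + 2 * ℓ * KleinGordon.charge_conserved hsa.isFormalAdjoint_self hk.isSymmetric hu hv s t
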